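/- arXiv:0805.3522 — 7 statements merged into one kernel-verified Lean document; each statement's English description precedes it below -/
import Mathlib

section
/- Let X and Y be nonempty finite subsets of an abelian group G. If there is an element c of G such that |X ∩ (c - Y)| = 1, then |X + Y| ≥ |X| + |Y| - 1. -/
/-!
Translate so that `0 = 0 + 0` is the unique representation of `0` in `X + Y`, and induct on `|Y|`.
If `X + Y ⊆ X`, then every `y ∈ Y` permutes `X`, so `0 = x + y` for some `x ∈ X`, forcing `y = 0`:
hence `Y = {0}` and the bound is an equality. Otherwise some `e ∈ X` has `e + Y ⊄ X`, and the Dyson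
`e`-transform `(X ∪ (e + Y), Y ∩ (X - e))` keeps `|X| + |Y|` and the unique representation of `0`,
does not enlarge the sumset, and strictly shrinks `Y`.
-/

open scoped Pointwise

namespace Finset

variable {G : Type*} [AddCommGroup G] [DecidableEq G]

theorem mem_singleton_sub {c x : G} {t : Finset G} : x ∈ {c} - t ↔ c - x ∈ t := by
  rw [singleton_sub, mem_image]
  refine ⟨?_, fun hx ↦ ⟨c - x, hx, sub_sub_cancel c x⟩⟩
  rintro ⟨y, hy, rfl⟩
  rwa [sub_sub_cancel]

theorem eq_singleton_zero_of_add_subset {s t : Finset G} (hs : 0 ∈ s) (ht : 0 ∈ t)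
    (h : ∀ x ∈ s, ∀ y ∈ t, x + y = 0 → x = 0) (hst : s + t ⊆ s) : t = {0} := by
  refine eq_singleton_iff_unique_mem.2 ⟨ht, fun y hy ↦ ?_⟩
  have hperm : y +ᵥ s = s :=
    eq_of_subset_of_card_le (fun z hz ↦ by
      obtain ⟨x, hx, rfl⟩ := mem_vadd_finset.1 hz
      exact hst (by rw [vadd_eq_add, add_comm y x]; exact add_mem_add hx hy))
      (card_vadd_finset y s).ge
  obtain ⟨x, hx, hxy⟩ := mem_vadd_finset.1 (hperm.symm ▸ hs : (0 : G) ∈ y +ᵥ s)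
  have hyx : x + y = 0 := by rw [add_comm]; exact hxy
  simpa [h x hx y hy hyx] using hyx

theorem zero_mem_addDysonETransform_snd {s t : Finset G} {e : G} (he : e ∈ s) (ht : 0 ∈ t) :
    0 ∈ (addDysonETransform e (s, t)).2 :=
  mem_inter.2 ⟨ht, mem_vadd_finset.2 ⟨e, he, neg_add_cancel e⟩⟩

theorem addDysonETransform_snd_ssubset {s t : Finset G} {e : G} (hst : ¬ e +ᵥ t ⊆ s) :
    (addDysonETransform e (s, t)).2 ⊂ t :=
  ssubset_of_subset_of_ne inter_subset_left fun heq ↦ hst <|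
    vadd_finset_subset_iff.2 (inter_eq_left.1 heq)

theorem eq_zero_of_mem_addDysonETransform_of_add_eq_zero {s t : Finset G} {e : G} (he : e ∈ s)
    (h : ∀ x ∈ s, ∀ y ∈ t, x + y = 0 → x = 0) :
    ∀ x ∈ (addDysonETransform e (s, t)).1, ∀ y ∈ (addDysonETransform e (s, t)).2,
      x + y = 0 → x = 0 := by
  simp only [addDysonETransform_fst, addDysonETransform_snd, mem_union, mem_inter,
    mem_vadd_finset, vadd_eq_add]
  rintro x (hx | ⟨y', hy', rfl⟩) y ⟨hy, x', hx', rfl⟩ hsum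
  · exact h x hx _ hy hsum
  · have hx'0 : x' = 0 := h x' hx' y' hy' (by rw [← hsum]; abel)
    subst hx'0
    have hy'0 : y' = 0 := by simpa using hsum
    subst hy'0
    simpa using h e he _ hy (by simp)

theorem card_add_card_le_card_add_add_one_of_add_eq_zero {s t : Finset G} (hs : 0 ∈ s)
    (ht : 0 ∈ t) (h : ∀ x ∈ s, ∀ y ∈ t, x + y = 0 → x = 0) : #s + #t ≤ #(s + t) + 1 := by
  induction t using Finset.strongInduction generalizing s with
  | H t ih =>
  by_cases hst : s + t ⊆ s
  · rw [eq_singleton_zero_of_add_subset hs ht h hst, card_add_singleton, card_singleton]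
  obtain ⟨e, he, hes⟩ : ∃ e ∈ s, ¬ e +ᵥ t ⊆ s := by
    contrapose! hst
    exact add_subset_iff.2 fun x hx y hy ↦ hst x hx (vadd_mem_vadd_finset hy)
  calc #s + #t = #(addDysonETransform e (s, t)).1 + #(addDysonETransform e (s, t)).2 :=
        (addDysonETransform.card e (s, t)).symm
    _ ≤ #((addDysonETransform e (s, t)).1 + (addDysonETransform e (s, t)).2) + 1 :=
        ih _ (addDysonETransform_snd_ssubset hes) (mem_union_left _ hs)
          (zero_mem_addDysonETransform_snd he ht) (eq_zero_of_mem_addDysonETransform_of_add_eq_zero he h)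
    _ ≤ #(s + t) + 1 := Nat.add_le_add_right (card_le_card (addDysonETransform.subset e (s, t))) 1

theorem card_add_card_le_card_add_add_one {s t : Finset G} {a b : G} (ha : a ∈ s) (hb : b ∈ t)
    (h : ∀ x ∈ s, ∀ y ∈ t, x + y = a + b → x = a) : #s + #t ≤ #(s + t) + 1 := by
  have key := card_add_card_le_card_add_add_one_of_add_eq_zero (s := -a +ᵥ s) (t := -b +ᵥ t)
    (mem_vadd_finset.2 ⟨a, ha, neg_add_cancel a⟩) (mem_vadd_finset.2 ⟨b, hb, neg_add_cancel b⟩) (by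
      simp only [mem_vadd_finset, vadd_eq_add]
      rintro _ ⟨x, hx, rfl⟩ _ ⟨y, hy, rfl⟩ hsum
      rw [h x hx y hy (by rw [← sub_eq_zero, ← hsum]; abel), neg_add_cancel])
  rwa [vadd_add_vadd, card_vadd_finset, card_vadd_finset, card_vadd_finset] at key

end Finset

theorem stmt1_general {G : Type*} [AddCommGroup G] [DecidableEq G]
    (X Y : Finset G)
    (c : G) (h : (X ∩ (({c} : Finset G) - Y)).card = 1) :
    X.card + Y.card ≤ (X + Y).card + 1 := by
  obtain ⟨a, ha⟩ := Finset.card_eq_one.1 h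
  obtain ⟨haX, hcaY⟩ := Finset.mem_inter.1 (ha ▸ Finset.mem_singleton_self a)
  refine Finset.card_add_card_le_card_add_add_one haX (Finset.mem_singleton_sub.1 hcaY)
    fun x hx y hy hxy ↦ Finset.mem_singleton.1 (ha ▸ Finset.mem_inter.2 ⟨hx, ?_⟩)
  rw [add_sub_cancel] at hxy
  rwa [Finset.mem_singleton_sub, ← hxy, add_sub_cancel_left]

theorem stmt1 {G : Type*} [AddCommGroup G] [DecidableEq G]
    (X Y : Finset G) (hX : X.Nonempty) (hY : Y.Nonempty)
    (c : G) (h : (X ∩ (({c} : Finset G) - Y)).card = 1) :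
    X.card + Y.card ≤ (X + Y).card + 1 :=
  stmt1_general X Y c h
end

section
/- Let S be a finite subset of an abelian group G and let X be a subset of G. Define X^S = G \ (X + S) and, for the set -S = {-s : s ∈ S}, define (X^S)^{-S} = G \ (X^S + (-S)). Then (X^S)^{-S} + S = X + S. -/
open scoped Pointwise

theorem stmt2 {G : Type*} [AddCommGroup G] (S : Finset G) (X : Set G) :
    ((X + (S : Set G))ᶜ + (-(S : Set G)))ᶜ + (S : Set G) = X + (S : Set G) := by
  ext g
  constructor
  · rintro ⟨z, hz, s, hs, rfl⟩
    by_contra h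
    exact hz ⟨z + s, h, -s, Set.neg_mem_neg.mpr hs, by simp⟩
  · rintro ⟨x, hx, s, hs, rfl⟩
    refine ⟨x, ?_, s, hs, rfl⟩
    rintro ⟨y, hy, t, ht, hyt⟩
    exact hy ⟨x, hx, -t, by simpa using Set.mem_neg.mp ht, by rw [← hyt]; simp⟩
end

section
/- Let S be a finite generating subset of an abelian group G with 0 ∈ S, and let H be a 1-atom of S which is a subgroup (with 0 ∈ H). Then κ₁(S) ≥ |S|/2, where κ₁(S) = |H + S| - |H|. -/
open scoped Pointwise

/-- `X` is a 1-atom of `S`: a finite nonempty set with `X + S ≠ G` minimizing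
`|X + S| - |X|` among such sets, and of minimum cardinality among these minimizers. -/
def IsOneAtom {G : Type*} [AddCommGroup G] [DecidableEq G] (S X : Finset G) : Prop :=
  X.Nonempty ∧ ((X + S : Finset G) : Set G) ≠ Set.univ ∧
  (∀ Y : Finset G, Y.Nonempty → ((Y + S : Finset G) : Set G) ≠ Set.univ →
      (X + S).card - X.card ≤ (Y + S).card - Y.card) ∧
  (∀ Y : Finset G, Y.Nonempty → ((Y + S : Finset G) : Set G) ≠ Set.univ →
      (∀ Z : Finset G, Z.Nonempty → ((Z + S : Finset G) : Set G) ≠ Set.univ →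
        (Y + S).card - Y.card ≤ (Z + S).card - Z.card) →
      X.card ≤ Y.card)

theorem stmt5 {G : Type*} [AddCommGroup G] [DecidableEq G] (S H : Finset G)
    (K : AddSubgroup G)
    (hgen : AddSubgroup.closure (S : Set G) = ⊤) (h0S : (0 : G) ∈ S)
    (hatom : IsOneAtom S H) (h0H : (0 : G) ∈ H) (hsub : (H : Set G) = (K : Set G)) :
    S.card ≤ 2 * ((H + S).card - H.card) := by
  obtain ⟨hne, hns, -, -⟩ := hatom
  have hHsub : H ⊆ H + S := fun x hx => by
    simpa using Finset.add_mem_add hx h0S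
  have hSsub : S ⊆ H + S := fun x hx => by
    simpa using Finset.add_mem_add h0H hx
  obtain ⟨s, hsS, hsK⟩ : ∃ s ∈ S, s ∉ K := by
    by_contra hc
    push_neg at hc
    have hle : AddSubgroup.closure (S : Set G) ≤ K :=
      (AddSubgroup.closure_le K).2 (fun x hx => hc x hx)
    rw [hgen] at hle
    have hKtop : K = ⊤ := top_le_iff.mp hle
    apply hns
    have hHuniv : (H : Set G) = Set.univ := by rw [hsub, hKtop]; simp
    apply Set.eq_univ_of_univ_subset
    rw [← hHuniv]
    exact Finset.coe_subset.mpr hHsub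
  have hdisj : Disjoint H (H.image (· + s)) := by
    rw [Finset.disjoint_left]
    rintro x hx hx2
    simp only [Finset.mem_image] at hx2
    obtain ⟨h, hh, rfl⟩ := hx2
    apply hsK
    have hxK : h + s ∈ (K : Set G) := by rw [← hsub]; exact hx
    have hhK : h ∈ (K : Set G) := by rw [← hsub]; exact hh
    have hsub' : (h + s) - h ∈ K := K.sub_mem hxK hhK
    simpa using hsub'
  have himg : H.image (· + s) ⊆ H + S := fun x hx => by
    simp only [Finset.mem_image] at hx
    obtain ⟨h, hh, rfl⟩ := hx
    exact Finset.add_mem_add hh hsS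
  have h2 : 2 * H.card ≤ (H + S).card := by
    have hcu := Finset.card_le_card (Finset.union_subset hHsub himg)
    rw [Finset.card_union_of_disjoint hdisj] at hcu
    have hcard : (H.image (· + s)).card = H.card :=
      Finset.card_image_of_injective _ (add_left_injective s)
    omega
  have h3 : S.card ≤ (H + S).card := Finset.card_le_card hSsub
  have h4 : H.card ≤ (H + S).card := Finset.card_le_card hHsub
  omega
end

section
/- Let G be an abelian group and let Y ⊆ G be a finite arithmetic progression with difference d containing 0, with |Y| ≥ 2. Let X be a finite subset of the subgroup ⟨Y⟩ generated by Y such that |X + Y| = |X| + |Y| - 1. Suppose that |⟨Y⟩| ≠ |X + Y| or |Y| = 2. Then X is an arithmetic progression with difference d. -/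
open scoped Pointwise

/-- `A` is an arithmetic progression with difference `d`:
`A = {a, a + d, ..., a + (k-1)d}` with the listed elements pairwise distinct. -/
def IsAPWith {G : Type*} [AddCommGroup G] [DecidableEq G] (d : G) (A : Finset G) : Prop :=
  ∃ (a : G) (k : ℕ), A.card = k ∧
    A = (Finset.range k).image (fun i => a + (i : ℕ) • d)

private lemma cardAddSingleton {G : Type*} [AddCommGroup G] [DecidableEq G] (B : Finset G)
    (a : G) : (B + {a}).card = B.card :=
  Finset.card_add_singleton B a

/-- If `x ∈ X`, `X ⊆ ⟨d⟩`, and one can go backwards from `x` by `d` at least `|X|` times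
staying in `X`, then `X` is all of `⟨d⟩`. -/
private lemma subC {G : Type*} [AddCommGroup G] [DecidableEq G] (d : G) (X : Finset G)
    (hsub : (X : Set G) ⊆ (AddSubgroup.zmultiples d : Set G)) (x : G) (hx : x ∈ X)
    (hall : ∀ m : ℕ, m ≤ X.card → x - m • d ∈ X) :
    (X : Set G) = (AddSubgroup.zmultiples d : Set G) := by
  obtain ⟨m1, hm1, m2, hm2, hne, heq⟩ :=
    Finset.exists_ne_map_eq_of_card_lt_of_maps_to (s := Finset.range (X.card + 1)) (t := X)
      (f := fun m => x - m • d) (by simp)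
      (fun m hm => hall m (Nat.lt_succ_iff.mp (Finset.mem_range.mp hm)))
  rw [Finset.mem_range] at hm1 hm2
  have hsm : m1 • d = m2 • d := by
    have := sub_right_inj.mp heq
    exact this
  -- wlog: p < q
  obtain ⟨p, q, hpq, hqle, hsm'⟩ : ∃ p q : ℕ, p < q ∧ q ≤ X.card ∧ p • d = q • d := by
    rcases hne.lt_or_gt with h | h
    · exact ⟨m1, m2, h, by omega, hsm⟩
    · exact ⟨m2, m1, h, by omega, hsm.symm⟩
  have hz : (q - p) • d = 0 := by
    rw [sub_nsmul d (le_of_lt hpq), hsm']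
    simp
  have hfin : IsOfFinAddOrder d :=
    isOfFinAddOrder_iff_nsmul_eq_zero.mpr ⟨q - p, by omega, hz⟩
  have hord : addOrderOf d ≤ X.card :=
    le_trans (addOrderOf_le_of_nsmul_eq_zero (by omega) hz) (by omega)
  have hZfin : (AddSubgroup.zmultiples d : Set G).Finite := hfin.finite_zmultiples
  refine Set.eq_of_subset_of_ncard_le hsub ?_ hZfin
  have h1 : (AddSubgroup.zmultiples d : Set G).ncard = addOrderOf d := by
    rw [← Nat.card_zmultiples d]
    exact (Nat.card_coe_set_eq _).symm
  rw [h1, Set.ncard_coe_finset]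
  exact hord

/-- Key lemma: if `|X ∪ (X + d)| = |X| + 1`, `X ⊆ ⟨d⟩` and `X ≠ ∅`,
then `X` is an AP with difference `d`. -/
private lemma lemB {G : Type*} [AddCommGroup G] [DecidableEq G] (d : G) (X : Finset G)
    (hne : X.Nonempty) (hsub : (X : Set G) ⊆ (AddSubgroup.zmultiples d : Set G))
    (hcard : (X ∪ (X + {d})).card = X.card + 1) : IsAPWith d X := by
  classical
  have hcd : (X + {d}).card = X.card := cardAddSingleton X d
  have h1 : (X \ (X + {d})).card = 1 := by
    have := Finset.card_sdiff_add_card X (X + {d})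
    omega
  obtain ⟨a, ha⟩ := Finset.card_eq_one.mp h1
  have haX : a ∈ X := by
    have : a ∈ X \ (X + {d}) := ha ▸ Finset.mem_singleton_self a
    exact (Finset.mem_sdiff.mp this).1
  have haNd : a ∉ X + {d} := by
    have : a ∈ X \ (X + {d}) := ha ▸ Finset.mem_singleton_self a
    exact (Finset.mem_sdiff.mp this).2
  have hmemd : ∀ x : G, x ∈ X + {d} ↔ x - d ∈ X := by
    intro x
    rw [Finset.mem_add]
    constructor
    · rintro ⟨y, hy, z, hz, rfl⟩
      rw [Finset.mem_singleton] at hz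
      rw [hz]
      simpa using hy
    · intro h
      exact ⟨x - d, h, d, Finset.mem_singleton_self d, sub_add_cancel x d⟩
  have haNd' : a - d ∉ X := fun h => haNd ((hmemd a).mpr h)
  have huniq : ∀ x ∈ X, x - d ∉ X → x = a := by
    intro x hxX hxd
    have : x ∈ X \ (X + {d}) := Finset.mem_sdiff.mpr ⟨hxX, fun h => hxd ((hmemd x).mp h)⟩
    rw [ha] at this
    exact Finset.mem_singleton.mp this
  -- no small torsion
  have hordX : ∀ i : ℕ, 0 < i → i < X.card → i • d ≠ 0 := by
    intro i hi hi' h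
    have hfin : IsOfFinAddOrder d := isOfFinAddOrder_iff_nsmul_eq_zero.mpr ⟨i, hi, h⟩
    have hle : addOrderOf d ≤ i := addOrderOf_le_of_nsmul_eq_zero hi h
    have hXle : X.card ≤ addOrderOf d := by
      have h2 := Set.ncard_le_ncard hsub hfin.finite_zmultiples
      rw [Set.ncard_coe_finset] at h2
      have h3 : (AddSubgroup.zmultiples d : Set G).ncard = addOrderOf d := by
        rw [← Nat.card_zmultiples d]
        exact (Nat.card_coe_set_eq _).symm
      omega
    omega
  have hinj : ∀ i < X.card, ∀ j < X.card, a + i • d = a + j • d → i = j := by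
    intro i hi j hj h
    have h' : i • d = j • d := add_left_cancel h
    rcases lt_trichotomy i j with hl | he | hl
    · exfalso
      exact hordX (j - i) (by omega) (by omega) (by rw [sub_nsmul d hl.le, h']; simp)
    · exact he
    · exfalso
      exact hordX (i - j) (by omega) (by omega) (by rw [sub_nsmul d hl.le, ← h']; simp)
  -- main induction
  have hmem : ∀ j, j < X.card → a + j • d ∈ X := by
    intro j
    induction j using Nat.strong_induction_on with
    | _ j IH =>
      intro hj
      set A := (Finset.range j).image (fun i : ℕ => a + i • d) with hA
      have hAsub : A ⊆ X := by
        intro y hy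
        obtain ⟨i, hi, rfl⟩ := Finset.mem_image.mp hy
        rw [Finset.mem_range] at hi
        exact IH i hi (by omega)
      have hAcard : A.card = j := by
        rw [hA, Finset.card_image_of_injOn, Finset.card_range]
        intro i hi i' hi' h
        simp only [Finset.coe_range, Set.mem_Iio] at hi hi'
        exact hinj i (by omega) i' (by omega) h
      have hXA : (X \ A).Nonempty := by
        rw [Finset.sdiff_nonempty]
        intro hXsubA
        have := Finset.card_le_card hXsubA
        omega
      obtain ⟨x', hx'⟩ := hXA
      have hx'X : x' ∈ X := (Finset.mem_sdiff.mp hx').1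
      have hx'A : x' ∉ A := (Finset.mem_sdiff.mp hx').2
      by_cases hall : ∀ m : ℕ, m ≤ X.card → x' - m • d ∈ X
      · exfalso
        have hXeq := subC d X hsub x' hx'X hall
        apply haNd'
        have had : a - d ∈ (AddSubgroup.zmultiples d : Set G) :=
          sub_mem (hsub haX) (AddSubgroup.mem_zmultiples d)
        rw [← hXeq] at had
        exact had
      · push_neg at hall
        obtain ⟨m, hmle, hm⟩ := hall
        have hex : ∃ m : ℕ, x' - m • d ∉ X := ⟨m, hm⟩
        have hm0spec : x' - (Nat.find hex) • d ∉ X := Nat.find_spec hex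
        have hm0min : ∀ t, t < Nat.find hex → x' - t • d ∈ X := fun t ht =>
          not_not.mp (Nat.find_min hex ht)
        have hm0pos : 0 < Nat.find hex := by
          rcases Nat.eq_zero_or_pos (Nat.find hex) with h | h
          · exfalso; apply hm0spec; rw [h]; simpa using hx'X
          · exact h
        set m0 := Nat.find hex with hm0def
        set m1 := m0 - 1 with hm1def
        have hx'' : x' - m1 • d ∈ X := hm0min m1 (by omega)
        have hx''d : (x' - m1 • d) - d ∉ X := by
          have he : (x' - m1 • d) - d = x' - m0 • d := by
            rw [sub_sub, ← succ_nsmul]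
            congr 2
            omega
          rwa [he]
        have hx'a : x' - m1 • d = a := huniq _ hx'' hx''d
        have hx'eq : x' = a + m1 • d := by
          rw [← hx'a]; abel
        have hjm1 : j ≤ m1 := by
          by_contra h
          push_neg at h
          apply hx'A
          rw [hA]
          exact Finset.mem_image.mpr ⟨m1, Finset.mem_range.mpr h, hx'eq.symm⟩
        have key : a + j • d = x' - (m1 - j) • d := by
          have h2 : (m1 - j) • d + j • d = m1 • d := by
            rw [← add_nsmul]; congr 1; omega
          rw [hx'eq, ← h2]; abel
        rw [key]
        exact hm0min _ (by omega)
  have hfinal : (Finset.range X.card).image (fun i : ℕ => a + i • d) = X := by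
    apply Finset.eq_of_subset_of_card_le
    · intro y hy
      obtain ⟨i, hi, rfl⟩ := Finset.mem_image.mp hy
      exact hmem i (Finset.mem_range.mp hi)
    · rw [Finset.card_image_of_injOn, Finset.card_range]
      intro i hi i' hi' h
      simp only [Finset.coe_range, Set.mem_Iio] at hi hi'
      exact hinj i hi i' hi' h
  exact ⟨a, X.card, rfl, hfinal.symm⟩

theorem stmt6 {G : Type*} [AddCommGroup G] [DecidableEq G] (d : G) (Y X : Finset G)
    (hY : IsAPWith d Y) (h0Y : (0 : G) ∈ Y) (hY2 : 2 ≤ Y.card)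
    (hXsub : (X : Set G) ⊆ (AddSubgroup.closure (Y : Set G) : Set G))
    (hcard : (X + Y).card + 1 = X.card + Y.card)
    (hside : Nat.card (AddSubgroup.closure (Y : Set G)) ≠ (X + Y).card ∨ Y.card = 2) :
    IsAPWith d X := by
  classical
  obtain ⟨a, k, hk, hYeq⟩ := hY
  have hk2 : 2 ≤ k := hk ▸ hY2
  -- d is in the closure of Y
  have h0 : a ∈ Y := by
    rw [hYeq]
    exact Finset.mem_image.mpr ⟨0, Finset.mem_range.mpr (by omega), by simp⟩
  have h1 : a + d ∈ Y := by
    rw [hYeq]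
    exact Finset.mem_image.mpr ⟨1, Finset.mem_range.mpr (by omega), by simp⟩
  have hdY : d ∈ AddSubgroup.closure (Y : Set G) := by
    have h := sub_mem (AddSubgroup.subset_closure (Finset.mem_coe.mpr h1))
      (AddSubgroup.subset_closure (Finset.mem_coe.mpr h0))
    simpa using h
  -- a ∈ zmultiples d
  have haz : a ∈ AddSubgroup.zmultiples d := by
    rw [hYeq] at h0Y
    obtain ⟨i0, _, h00⟩ := Finset.mem_image.mp h0Y
    have : a = -(i0 • d) := eq_neg_of_add_eq_zero_left h00
    rw [this]
    exact neg_mem (nsmul_mem (AddSubgroup.mem_zmultiples d) i0)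
  have hclosure : AddSubgroup.closure (Y : Set G) = AddSubgroup.zmultiples d := by
    apply le_antisymm
    · rw [AddSubgroup.closure_le]
      intro y hy
      rw [Finset.mem_coe, hYeq] at hy
      obtain ⟨i, _, rfl⟩ := Finset.mem_image.mp hy
      exact add_mem haz (nsmul_mem (AddSubgroup.mem_zmultiples d) i)
    · exact AddSubgroup.zmultiples_le_of_mem hdY
  have hXz : (X : Set G) ⊆ (AddSubgroup.zmultiples d : Set G) := by
    rwa [hclosure] at hXsub
  have hXne : X.Nonempty := by
    rcases X.eq_empty_or_nonempty with h | h
    · exfalso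
      rw [h] at hcard
      simp only [Finset.empty_add, Finset.card_empty] at hcard
      omega
    · exact h
  -- the truncated progressions
  set T : ℕ → Finset G := fun j => (Finset.range j).image (fun i : ℕ => i • d) with hT
  have hTmono : ∀ i j : ℕ, i ≤ j → T i ⊆ T j := fun i j hij =>
    Finset.image_subset_image (Finset.range_subset_range.mpr hij)
  have hTz : ∀ j, ((X + T j : Finset G) : Set G) ⊆ (AddSubgroup.zmultiples d : Set G) := by
    intro j
    rw [Finset.coe_add]
    rintro z ⟨x, hx, t, ht, rfl⟩
    obtain ⟨i, _, rfl⟩ := Finset.mem_image.mp (Finset.mem_coe.mp ht)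
    exact add_mem (hXz hx) (nsmul_mem (AddSubgroup.mem_zmultiples d) i)
  have hS1 : X + T 1 = X := by
    have h0' : T 1 = (0 : Finset G) := by
      rw [hT]
      simp
      rfl
    rw [h0', add_zero]
  -- relate X + Y to X + T k
  have hYT : Y = {a} + T k := by
    rw [hYeq, hT]
    ext z
    simp only [Finset.mem_image, Finset.mem_add, Finset.mem_singleton, Finset.mem_range]
    constructor
    · rintro ⟨i, hi, rfl⟩
      exact ⟨a, rfl, i • d, ⟨i, hi, rfl⟩, rfl⟩
    · rintro ⟨b, rfl, c, ⟨i, hi, rfl⟩, rfl⟩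
      exact ⟨i, hi, rfl⟩
  have hXYT : X + Y = (X + T k) + {a} := by
    rw [hYT, add_comm ({a} : Finset G) (T k), ← add_assoc]
  have hcardXY : (X + Y).card = (X + T k).card := by
    rw [hXYT, cardAddSingleton]
  have hSk : (X + T k).card + 1 = X.card + k := by
    rw [← hcardXY]
    omega
  -- strictness under the first branch of hside
  have hstrict : Nat.card (AddSubgroup.closure (Y : Set G)) ≠ (X + Y).card →
      ∀ j, 1 ≤ j → j < k → (X + T j).card < (X + T (j + 1)).card := by
    intro hne j hj1 hjk
    have hsub' : X + T j ⊆ X + T (j + 1) :=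
      Finset.add_subset_add_left (hTmono j (j + 1) (by omega))
    rcases lt_or_eq_of_le (Finset.card_le_card hsub') with h | h
    · exact h
    exfalso
    have hSeq : X + T j = X + T (j + 1) := Finset.eq_of_subset_of_card_le hsub' (le_of_eq h.symm)
    -- stability: (X + T j) + {d} = X + T j
    have hstab : (X + T j) + {d} ⊆ X + T j := by
      intro z hz
      rw [Finset.mem_add] at hz
      obtain ⟨y, hy, w, hw, rfl⟩ := hz
      rw [Finset.mem_singleton] at hw
      rw [hw, hSeq]
      rw [Finset.mem_add] at hy
      obtain ⟨x, hx, t, ht, rfl⟩ := hy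
      obtain ⟨i, hi, rfl⟩ := Finset.mem_image.mp ht
      rw [Finset.mem_range] at hi
      rw [Finset.mem_add]
      refine ⟨x, hx, (i + 1) • d, ?_, by rw [succ_nsmul]; abel⟩
      exact Finset.mem_image.mpr ⟨i + 1, Finset.mem_range.mpr (by omega), rfl⟩
    have hstab' : (X + T j) + {d} = X + T j :=
      Finset.eq_of_subset_of_card_le hstab (le_of_eq (cardAddSingleton _ d).symm)
    -- backwards closure
    have hback : ∀ s ∈ X + T j, s - d ∈ X + T j := by
      intro s hs
      conv at hs => rw [← hstab']
      rw [Finset.mem_add] at hs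
      obtain ⟨y, hy, w, hw, rfl⟩ := hs
      rw [Finset.mem_singleton] at hw
      rw [hw]
      simpa using hy
    have hbackm : ∀ s ∈ X + T j, ∀ m : ℕ, s - m • d ∈ X + T j := by
      intro s hs m
      induction m with
      | zero => simpa using hs
      | succ n ihn =>
        have : s - (n + 1) • d = (s - n • d) - d := by
          rw [succ_nsmul]; abel
        rw [this]
        exact hback _ ihn
    have hSne : (X + T j).Nonempty := by
      obtain ⟨x, hx⟩ := hXne
      exact ⟨x + 0 • d, Finset.mem_add.mpr ⟨x, hx, 0 • d,
        Finset.mem_image.mpr ⟨0, Finset.mem_range.mpr (by omega), rfl⟩, rfl⟩⟩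
    obtain ⟨s, hs⟩ := hSne
    have hSfull := subC d (X + T j) (hTz j) s hs (fun m _ => hbackm s hs m)
    -- then X + T k = X + T j, so |X + Y| = Nat.card (closure Y)
    have hjk' : X + T j ⊆ X + T k := Finset.add_subset_add_left (hTmono j k (by omega))
    have hkfull : ((X + T k : Finset G) : Set G) = (AddSubgroup.zmultiples d : Set G) :=
      le_antisymm (hTz k) (by rw [← hSfull]; exact_mod_cast hjk')
    apply hne
    rw [hclosure, hcardXY]
    have hnc : Nat.card (AddSubgroup.zmultiples d) = (AddSubgroup.zmultiples d : Set G).ncard :=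
      Nat.card_coe_set_eq _
    rw [hnc, ← hkfull, Set.ncard_coe_finset]
  -- conclude |X ∪ (X + {d})| = |X| + 1
  have hT2 : X + T 2 = X ∪ (X + {d}) := by
    have h2 : T 2 = {(0 : G)} ∪ {d} := by
      show Finset.image (fun i : ℕ => i • d) (Finset.range 2) = {0} ∪ {d}
      rw [show Finset.range 2 = {0, 1} from by decide, Finset.image_insert,
        Finset.image_singleton]
      ext z
      simp
    rw [h2, Finset.add_union]
    congr 1
    have h0' : ({(0 : G)} : Finset G) = (0 : Finset G) := rfl
    rw [h0', add_zero]
  have hgoal : (X + T 2).card = X.card + 1 := by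
    rcases hside with hne | hk2'
    · have hstrict' := hstrict hne
      have hlow : X.card < (X + T 2).card := by
        have := hstrict' 1 (by omega) (by omega)
        rwa [hS1] at this
      have hchain : ∀ m : ℕ, 2 + m ≤ k → (X + T 2).card + m ≤ (X + T (2 + m)).card := by
        intro m
        induction m with
        | zero => intro _; simp
        | succ n ihn =>
          intro hmk
          have h1' := ihn (by omega)
          have h2' := hstrict' (2 + n) (by omega) (by omega)
          have : 2 + (n + 1) = (2 + n) + 1 := by omega
          rw [this]
          omega
      have := hchain (k - 2) (by omega)
      have hkk : 2 + (k - 2) = k := by omega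
      rw [hkk] at this
      omega
    · have : k = 2 := hk ▸ hk2'
      rw [← this]
      omega
  rw [hT2] at hgoal
  exact lemB d X hXne hXz hgoal
end

section
/- Let G be an abelian group and S a finite 2-separable generating subset with 0 ∈ S. Let H be a finite subgroup of G which is a 2-fragment of S, and let φ : G → G/H be the canonical morphism. Then κ₁(φ(S)) = |φ(S)| - 1. -/
open scoped Pointwise Classical

/-- The `k`-th connectivity `κ_k(S)`: minimum of `|X + S| - |X|` over finite `X`
with `|X| ≥ k` and `|X + S| ≤ |G| - k`, with `min ∅ = |G| - 2k + 1`. -/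
noncomputable def kappa {G : Type*} [AddCommGroup G] [DecidableEq G]
    (k : ℕ) (S : Finset G) : ℕ :=
  if ∃ X : Finset G, k ≤ X.card ∧ (X + S).card ≤ Nat.card G - k then
    sInf {d : ℕ | ∃ X : Finset G, k ≤ X.card ∧ (X + S).card ≤ Nat.card G - k ∧
      d = (X + S).card - X.card}
  else Nat.card G - 2 * k + 1

/-- `S` is `k`-separable: some `X` has `|X| ≥ k` and `|G \ (X + S)| ≥ k`. -/
def KSeparable {G : Type*} [AddCommGroup G] [DecidableEq G] (k : ℕ) (S : Finset G) : Prop :=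
  ∃ X : Finset G, k ≤ X.card ∧ (X + S).card ≤ Nat.card G - k

/-- `X` is a `k`-fragment of `S`: `|X| ≥ k`, `|G \ (X + S)| ≥ k` and
`|X + S| - |X| = κ_k(S)`. -/
def IsFragment {G : Type*} [AddCommGroup G] [DecidableEq G] (k : ℕ) (S X : Finset G) : Prop :=
  k ≤ X.card ∧ (X + S).card ≤ Nat.card G - k ∧ (X + S).card - X.card = kappa k S

/-- A hyper-atom of `S` is a subgroup of maximal cardinality which is a `1`-fragment. -/
def IsHyperAtom {G : Type*} [AddCommGroup G] [DecidableEq G]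
    (S : Finset G) (H : AddSubgroup G) : Prop :=
  (∃ HF : Finset G, (HF : Set G) = (H : Set G) ∧ IsFragment 1 S HF) ∧
  ∀ (K : AddSubgroup G) (KF : Finset G), (KF : Set G) = (K : Set G) →
    IsFragment 1 S KF → Nat.card K ≤ Nat.card H


/-!
Write `φ : G → G/H` and `T = φ(S)`. Pulling back along `φ` multiplies cardinalities by `|H|` and
commutes with adding `S`: `φ⁻¹(X) + S = φ⁻¹(X + T)`. Since `H = φ⁻¹{0}` is a `2`-fragment,
`κ₂(S) = |H| (|T| - 1)`; and for every `X` admissible for `κ₁(T)` the set `φ⁻¹(X)` is admissible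
for `κ₂(S)` (as `|H| ≥ 2`), whence `|H| (|X + T| - |X|) ≥ κ₂(S) = |H| (|T| - 1)`. The bound is
attained at `X = {0}`, which is admissible because `|T| < |G/H|`.
-/

open Finset QuotientAddGroup

section Kappa

variable {G : Type*} [AddCommGroup G] [DecidableEq G] {k : ℕ} {S : Finset G}

theorem kappa_le_of_admissible {X : Finset G} (hX : k ≤ X.card)
    (hXS : (X + S).card ≤ Nat.card G - k) : kappa k S ≤ (X + S).card - X.card := by
  rw [kappa, if_pos ⟨X, hX, hXS⟩]
  exact Nat.sInf_le ⟨X, hX, hXS, rfl⟩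

theorem le_kappa_of_forall_admissible {d : ℕ} (hsep : KSeparable k S)
    (h : ∀ X : Finset G, k ≤ X.card → (X + S).card ≤ Nat.card G - k →
      d ≤ (X + S).card - X.card) :
    d ≤ kappa k S := by
  obtain ⟨X, hX, hXS⟩ := hsep
  rw [kappa, if_pos ⟨X, hX, hXS⟩]
  refine le_csInf ⟨_, X, hX, hXS, rfl⟩ ?_
  rintro _ ⟨Y, hY, hYS, rfl⟩
  exact h Y hY hYS

end Kappa

section QuotientPreimage

variable {G : Type*} [AddCommGroup G] [Fintype G] (H : AddSubgroup G)

noncomputable def quotientPreimage (A : Finset (G ⧸ H)) : Finset G :=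
  univ.filter fun g => mk' H g ∈ A

@[simp]
theorem mem_quotientPreimage {A : Finset (G ⧸ H)} {g : G} :
    g ∈ quotientPreimage H A ↔ (g : G ⧸ H) ∈ A := by
  rw [quotientPreimage, mem_filter]
  simp

theorem card_quotientPreimage (A : Finset (G ⧸ H)) :
    (quotientPreimage H A).card = Nat.card H * A.card := by
  have hcoe : (quotientPreimage H A : Set G) = mk ⁻¹' (A : Set (G ⧸ H)) := by
    ext g; simp
  calc (quotientPreimage H A).card
      = Nat.card (mk ⁻¹' (A : Set (G ⧸ H)) : Set G) := by
        rw [← hcoe, Nat.card_coe_set_eq, Set.ncard_coe_finset]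
    _ = Nat.card (H × (A : Set (G ⧸ H))) :=
        Nat.card_congr (preimageMkEquivAddSubgroupProdSet H _)
    _ = Nat.card H * A.card := by
        rw [Nat.card_prod, Nat.card_coe_set_eq, Set.ncard_coe_finset]

theorem quotientPreimage_add [DecidableEq G] (A : Finset (G ⧸ H)) (S : Finset G) :
    quotientPreimage H A + S = quotientPreimage H (A + S.image (mk' H)) := by
  ext g
  simp only [mem_add, mem_quotientPreimage, mem_image]
  constructor
  · rintro ⟨y, hy, s, hs, rfl⟩
    exact ⟨_, hy, _, ⟨s, hs, rfl⟩, by simp⟩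
  · rintro ⟨a, ha, _, ⟨s, hs, rfl⟩, hg⟩
    refine ⟨g - s, ?_, s, hs, sub_add_cancel g s⟩
    rw [mk_sub, ← hg]
    simpa using ha

theorem quotientPreimage_zero_add [DecidableEq G] (S : Finset G) :
    quotientPreimage H {0} + S = quotientPreimage H (S.image (mk' H)) := by
  rw [quotientPreimage_add, singleton_add, zero_vadd]

theorem eq_quotientPreimage_zero {HF : Finset G} (hHF : (HF : Set G) = H) :
    HF = quotientPreimage H {0} := by
  ext g
  rw [← mem_coe, hHF, SetLike.mem_coe, mem_quotientPreimage, mem_singleton, eq_zero_iff]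

end QuotientPreimage

section Fragment

variable {G : Type*} [AddCommGroup G] [Fintype G] [DecidableEq G] {H : AddSubgroup G}
  {S : Finset G}

theorem two_le_card_of_isFragment (hfrag : IsFragment 2 S (quotientPreimage H {0})) :
    2 ≤ Nat.card H := by
  simpa [card_quotientPreimage] using hfrag.1

theorem kappa_two_eq_of_isFragment (hfrag : IsFragment 2 S (quotientPreimage H {0})) :
    kappa 2 S = Nat.card H * ((S.image (mk' H)).card - 1) := by
  rw [← hfrag.2.2, quotientPreimage_zero_add, card_quotientPreimage, card_quotientPreimage,
    card_singleton, Nat.mul_sub, mul_one]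

theorem card_image_mk_lt_of_isFragment (hfrag : IsFragment 2 S (quotientPreimage H {0})) :
    (S.image (mk' H)).card < Nat.card (G ⧸ H) := by
  have hbound := hfrag.2.1
  rw [quotientPreimage_zero_add, card_quotientPreimage,
    AddSubgroup.card_eq_card_quotient_mul_card_addSubgroup H,
    mul_comm (Nat.card (G ⧸ H))] at hbound
  have hpos : 0 < Nat.card H * Nat.card (G ⧸ H) := Nat.mul_pos Nat.card_pos Nat.card_pos
  have hlt : Nat.card H * (S.image (mk' H)).card < Nat.card H * Nat.card (G ⧸ H) := by omega
  exact Nat.lt_of_mul_lt_mul_left hlt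

theorem card_image_mk_sub_one_le (hfrag : IsFragment 2 S (quotientPreimage H {0}))
    {X : Finset (G ⧸ H)} (hX : 1 ≤ X.card)
    (hXS : (X + S.image (mk' H)).card ≤ Nat.card (G ⧸ H) - 1) :
    (S.image (mk' H)).card - 1 ≤ (X + S.image (mk' H)).card - X.card := by
  have h2 := two_le_card_of_isFragment hfrag
  have hcardG := AddSubgroup.card_eq_card_quotient_mul_card_addSubgroup H
  have hadm : (quotientPreimage H X + S).card ≤ Nat.card G - 2 := by
    rw [quotientPreimage_add, card_quotientPreimage, hcardG, mul_comm (Nat.card (G ⧸ H))]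
    calc Nat.card H * (X + S.image (mk' H)).card
        ≤ Nat.card H * (Nat.card (G ⧸ H) - 1) := Nat.mul_le_mul_left _ hXS
      _ = Nat.card H * Nat.card (G ⧸ H) - Nat.card H := by rw [Nat.mul_sub, mul_one]
      _ ≤ Nat.card H * Nat.card (G ⧸ H) - 2 := by omega
  have hsize : 2 ≤ (quotientPreimage H X).card := by
    rw [card_quotientPreimage]
    nlinarith
  have hle := kappa_le_of_admissible hsize hadm
  rw [kappa_two_eq_of_isFragment hfrag, quotientPreimage_add, card_quotientPreimage,
    card_quotientPreimage, ← Nat.mul_sub] at hle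
  exact Nat.le_of_mul_le_mul_left hle (by omega)

end Fragment

theorem stmt11_general {G : Type*} [AddCommGroup G] [Fintype G] [DecidableEq G] (S : Finset G)
    (H : AddSubgroup G) (HF : Finset G) (hHF : (HF : Set G) = (H : Set G))
    (hfrag : IsFragment 2 S HF) :
    kappa 1 (S.image (QuotientAddGroup.mk' H))
      = (S.image (QuotientAddGroup.mk' H)).card - 1 := by
  obtain rfl := eq_quotientPreimage_zero H hHF
  have hlt := card_image_mk_lt_of_isFragment hfrag
  have hzero_add : ({0} : Finset (G ⧸ H)) + S.image (mk' H) = S.image (mk' H) := by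
    rw [singleton_add, zero_vadd]
  have hsize : 1 ≤ ({0} : Finset (G ⧸ H)).card := by simp
  have hadm : (({0} : Finset (G ⧸ H)) + S.image (mk' H)).card ≤ Nat.card (G ⧸ H) - 1 := by
    rw [hzero_add]; omega
  apply le_antisymm
  · simpa [hzero_add] using kappa_le_of_admissible hsize hadm
  · exact le_kappa_of_forall_admissible ⟨_, hsize, hadm⟩
      fun X hX hXS => card_image_mk_sub_one_le hfrag hX hXS

theorem stmt11 {G : Type*} [AddCommGroup G] [Fintype G] [DecidableEq G] (S : Finset G)
    (hgen : AddSubgroup.closure (S : Set G) = ⊤) (h0S : (0 : G) ∈ S)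
    (hsep : KSeparable 2 S)
    (H : AddSubgroup G) (HF : Finset G) (hHF : (HF : Set G) = (H : Set G))
    (hfrag : IsFragment 2 S HF) :
    kappa 1 (S.image (QuotientAddGroup.mk' H))
      = (S.image (QuotientAddGroup.mk' H)).card - 1 :=
  stmt11_general S H HF hHF hfrag
end

section
/- Let S be a finite generating subset of an abelian group G with 0 ∈ S, |S| ≤ (|G|+1)/2 and κ₂(S) ≤ |S| - 1, and let H be a hyper-atom of S. Then 2|φ(S)| - 1 ≤ |G|/|H|, where φ : G → G/H is the canonical morphism. -/
open scoped Pointwise Classical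

theorem stmt15 {G : Type*} [AddCommGroup G] [Fintype G] [DecidableEq G] (S : Finset G)
    (hgen : AddSubgroup.closure (S : Set G) = ⊤) (h0S : (0 : G) ∈ S)
    (hsize : 2 * S.card ≤ Nat.card G + 1)
    (hk : kappa 2 S + 1 ≤ S.card)
    (H : AddSubgroup G) (hH : IsHyperAtom S H) :
    2 * (S.image (QuotientAddGroup.mk' H)).card ≤ Nat.card G / Nat.card H + 1 := by
  classical
  obtain ⟨⟨HF, hHF, hfrag⟩, -⟩ := hH
  have hmem : ∀ x : G, x ∈ HF ↔ x ∈ H := by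
    intro x
    rw [← Finset.mem_coe, hHF, SetLike.mem_coe]
  have hcardG : Nat.card G = Nat.card (G ⧸ H) * Nat.card H :=
    AddSubgroup.card_eq_card_quotient_mul_card_addSubgroup H
  have hHpos : 0 < Nat.card H := Nat.card_pos
  have hdiv : Nat.card G / Nat.card H = Nat.card (G ⧸ H) := by
    rw [hcardG, Nat.mul_div_cancel _ hHpos]
  rw [hdiv]
  set φ := QuotientAddGroup.mk' H with hφ
  set T := S.image φ with hT
  have hS1 : 1 ≤ S.card := Finset.card_pos.2 ⟨0, h0S⟩
  have hq1 : 1 ≤ T.card := Finset.card_pos.2 ⟨φ 0, Finset.mem_image_of_mem φ h0S⟩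
  by_cases hSn : S.card ≤ Nat.card G - 1
  · -- main case
    have ha : HF.card = Nat.card H := by
      have h1 : (HF : Set G).ncard = (H : Set G).ncard := by rw [hHF]
      rwa [Set.ncard_coe_finset, ← Nat.card_coe_set_eq, SetLike.coe_sort_coe] at h1
    -- every fiber over T inside HF + S has card HF.card
    have hfib : ∀ t ∈ T, ((HF + S).filter (fun x => φ x = t)).card = HF.card := by
      intro t ht
      obtain ⟨s, hs, rfl⟩ := Finset.mem_image.1 ht
      apply Finset.card_bij' (fun x _ => x - s) (fun y _ => y + s)
      · intro x hx
        rw [Finset.mem_filter] at hx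
        obtain ⟨z, hz, hxz⟩ := (QuotientAddGroup.mk'_eq_mk' H).1 hx.2
        have hxs : x - s = -z := by rw [← hxz]; abel
        exact (hmem _).2 (hxs ▸ neg_mem hz)
      · intro y hy
        have hyH : y ∈ H := (hmem _).1 hy
        rw [Finset.mem_filter]
        refine ⟨Finset.add_mem_add hy hs, ?_⟩
        exact (QuotientAddGroup.mk'_eq_mk' H).2 ⟨-y, neg_mem hyH, by abel⟩
      · intro x _
        abel
      · intro y _
        abel
    have hqa : (HF + S).card = T.card * HF.card := by
      rw [Finset.card_eq_sum_card_fiberwise (f := φ) (t := T) ?_]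
      · rw [Finset.sum_congr rfl hfib, Finset.sum_const, smul_eq_mul]
      · intro x hx
        obtain ⟨h, hh, s, hs, rfl⟩ := Finset.mem_add.1 hx
        have hφh : φ h = 0 := by
          rw [hφ, QuotientAddGroup.mk'_apply, QuotientAddGroup.eq_zero_iff]
          exact (hmem _).1 hh
        have : φ (h + s) = φ s := by rw [map_add, hφh, zero_add]
        rw [this]
        exact Finset.mem_image_of_mem φ hs
    have hsep : ∃ X : Finset G, 1 ≤ X.card ∧ (X + S).card ≤ Nat.card G - 1 :=
      ⟨HF, hfrag.1, hfrag.2.1⟩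
    have h0add : ({0} : Finset G) + S = S := by
      rw [Finset.singleton_add]
      simp
    have hk1 : kappa 1 S ≤ S.card - 1 := by
      unfold kappa
      rw [if_pos hsep]
      apply Nat.sInf_le
      refine ⟨{0}, by rw [Finset.card_singleton], ?_, ?_⟩
      · rw [h0add]; exact hSn
      · rw [h0add, Finset.card_singleton]
    have hkeq : (HF + S).card - HF.card = kappa 1 S := hfrag.2.2
    have key : 2 * (T.card * Nat.card H) < (Nat.card (G ⧸ H) + 2) * Nat.card H := by
      have e1 : T.card * Nat.card H - Nat.card H ≤ S.card - 1 := by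
        rw [← ha, ← hqa, hkeq]; exact hk1
      have e2 : Nat.card H ≤ T.card * Nat.card H := Nat.le_mul_of_pos_left _ hq1
      have e3 : 2 * S.card ≤ Nat.card (G ⧸ H) * Nat.card H + 1 := by
        rw [← hcardG]; exact hsize
      rw [Nat.add_mul]
      set P := T.card * Nat.card H
      set Q := Nat.card (G ⧸ H) * Nat.card H
      omega
    have key2 : Nat.card H * (2 * T.card) < Nat.card H * (Nat.card (G ⧸ H) + 2) := by
      calc Nat.card H * (2 * T.card) = 2 * (T.card * Nat.card H) := by ring
        _ < (Nat.card (G ⧸ H) + 2) * Nat.card H := key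
        _ = Nat.card H * (Nat.card (G ⧸ H) + 2) := by ring
    have := Nat.lt_of_mul_lt_mul_left key2
    omega
  · -- degenerate case : S.card ≥ Nat.card G, hence Nat.card G = 1
    have hScard : S.card ≤ Nat.card G := by
      rw [Nat.card_eq_fintype_card]
      exact Finset.card_le_univ S
    have hGpos : 0 < Nat.card G := Nat.card_pos
    have hn1 : Nat.card G = 1 := by omega
    have hm1 : Nat.card (G ⧸ H) = 1 :=
      Nat.eq_one_of_mul_eq_one_right (hn1 ▸ hcardG.symm)
    have hTle : T.card ≤ Nat.card (G ⧸ H) := by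
      rw [Nat.card_eq_fintype_card]
      exact Finset.card_le_univ T
    omega
end

section
/- Let G be an abelian group, H a finite subgroup, and A, B finite subsets of G that are both H-quasi-periodic, with A + B aperiodic and |A + B| = |A| + |B| - 1. Let φ : G → G/H be the canonical morphism and let A₀ ⊆ A and B₀ ⊆ B be the (unique) non-H-periodic coset traces, i.e., A \ A₀ and B \ B₀ are H-periodic and A₀, B₀ are each contained in a single H-coset with 0 < |A₀| < |H| or A₀ = A, similarly for B₀. Then the element φ(A₀) + φ(B₀) of G/H is uniquely representable in φ(A) + φ(B): |(φ(a₀ + b₀) - φ(A)) ∩ φ(B)| = 1 for a₀ ∈ A₀, b₀ ∈ B₀. -/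
open scoped Pointwise Classical

/-- A finite set is aperiodic if its period `{g : A + g = A}` is trivial. -/
def IsAperiodic {G : Type*} [AddCommGroup G] [DecidableEq G] (A : Finset G) : Prop :=
  ∀ g : G, A + ({g} : Finset G) = A → g = 0

/-- `A` is `H`-quasi-periodic: there is `x` with `(A \ (x + H)) + H = A \ (x + H)`. -/
def QuasiPeriodic {G : Type*} [AddCommGroup G] (H A : Set G) : Prop :=
  ∃ x : G, (A \ ({x} + H)) + H = A \ ({x} + H)

theorem stmt18 {G : Type*} [AddCommGroup G] [DecidableEq G]
    (H : AddSubgroup G) [Finite H] (hHne : H ≠ ⊥)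
    (A B : Finset G)
    (hA : QuasiPeriodic (H : Set G) (A : Set G))
    (hB : QuasiPeriodic (H : Set G) (B : Set G))
    (hap : IsAperiodic (A + B))
    (hcard : (A + B).card + 1 = A.card + B.card)
    (A₀ B₀ : Finset G) (hA₀A : A₀ ⊆ A) (hB₀B : B₀ ⊆ B)
    (hAper : (((A \ A₀ : Finset G)) : Set G) + (H : Set G) = ((A \ A₀ : Finset G) : Set G))
    (hBper : (((B \ B₀ : Finset G)) : Set G) + (H : Set G) = ((B \ B₀ : Finset G) : Set G))
    (hA₀coset : ∃ x : G, (A₀ : Set G) ⊆ {x} + (H : Set G))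
    (hB₀coset : ∃ x : G, (B₀ : Set G) ⊆ {x} + (H : Set G))
    (hA₀size : (0 < A₀.card ∧ A₀.card < Nat.card H) ∨ A₀ = A)
    (hB₀size : (0 < B₀.card ∧ B₀.card < Nat.card H) ∨ B₀ = B)
    (a₀ : G) (ha₀ : a₀ ∈ A₀) (b₀ : G) (hb₀ : b₀ ∈ B₀) :
    ((A.image (QuotientAddGroup.mk' H)).image
          (fun z => QuotientAddGroup.mk' H (a₀ + b₀) - z)
        ∩ B.image (QuotientAddGroup.mk' H)).card = 1 := by
  classical
  set q := QuotientAddGroup.mk' H with hqdef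
  have hq0 : ∀ z : G, q z = 0 ↔ z ∈ H := fun z => QuotientAddGroup.eq_zero_iff z
  -- all elements of A₀ have the same image, namely q a₀
  have hA₀q : ∀ x ∈ A₀, q x = q a₀ := by
    obtain ⟨c, hc⟩ := hA₀coset
    have qc : ∀ x ∈ A₀, q x = q c := by
      intro x hx
      have hm := hc (Finset.mem_coe.mpr hx)
      simp only [Set.mem_add, Set.mem_singleton_iff, SetLike.mem_coe] at hm
      obtain ⟨u, rfl, v, hv, rfl⟩ := hm
      rw [map_add, (hq0 v).mpr hv, add_zero]
    intro x hx
    rw [qc x hx, ← qc a₀ ha₀]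
  have hB₀q : ∀ x ∈ B₀, q x = q b₀ := by
    obtain ⟨c, hc⟩ := hB₀coset
    have qc : ∀ x ∈ B₀, q x = q c := by
      intro x hx
      have hm := hc (Finset.mem_coe.mpr hx)
      simp only [Set.mem_add, Set.mem_singleton_iff, SetLike.mem_coe] at hm
      obtain ⟨u, rfl, v, hv, rfl⟩ := hm
      rw [map_add, (hq0 v).mpr hv, add_zero]
    intro x hx
    rw [qc x hx, ← qc b₀ hb₀]
  -- periodicity of A \ A₀ and B \ B₀
  have memA' : ∀ x ∈ A \ A₀, ∀ k ∈ H, x + k ∈ A \ A₀ := by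
    intro x hx k hk
    have : x + k ∈ ((A \ A₀ : Finset G) : Set G) + (H : Set G) :=
      Set.add_mem_add (Finset.mem_coe.mpr hx) hk
    rw [hAper] at this
    exact_mod_cast this
  have memB' : ∀ x ∈ B \ B₀, ∀ k ∈ H, x + k ∈ B \ B₀ := by
    intro x hx k hk
    have : x + k ∈ ((B \ B₀ : Finset G) : Set G) + (H : Set G) :=
      Set.add_mem_add (Finset.mem_coe.mpr hx) hk
    rw [hBper] at this
    exact_mod_cast this
  -- a nonzero element of H
  obtain ⟨h, hhH, hh0⟩ : ∃ h ∈ H, h ≠ 0 := by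
    by_contra hcon
    push_neg at hcon
    apply hHne
    ext x
    simp only [AddSubgroup.mem_bot]
    exact ⟨fun hx => hcon x hx, fun hx => hx ▸ H.zero_mem⟩
  have hqh : q h = 0 := (hq0 h).mpr hhH
  -- key uniqueness
  have key : ∀ a ∈ A, ∀ b ∈ B, q a + q b = q a₀ + q b₀ → q b = q b₀ := by
    intro a ha b hb hab
    by_contra hbb
    have haa : q a ≠ q a₀ := by
      intro he
      rw [he] at hab
      exact hbb (add_left_cancel hab)
    have haA' : a ∈ A \ A₀ :=
      Finset.mem_sdiff.mpr ⟨ha, fun hm => haa (hA₀q a hm)⟩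
    have hbB' : b ∈ B \ B₀ :=
      Finset.mem_sdiff.mpr ⟨hb, fun hm => hbb (hB₀q b hm)⟩
    have hper : (A + B) + ({h} : Finset G) = A + B := by
      apply Finset.eq_of_subset_of_card_le
      · intro c hc
        rw [Finset.mem_add] at hc
        obtain ⟨d, hd, e, he, rfl⟩ := hc
        rw [Finset.mem_singleton.mp he]
        rw [Finset.mem_add] at hd
        obtain ⟨x, hx, y, hy, rfl⟩ := hd
        by_cases hxA : x ∈ A₀
        · by_cases hyB : y ∈ B₀
          · have hqx : q x = q a₀ := hA₀q x hxA
            have hqy : q y = q b₀ := hB₀q y hyB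
            have hk : (x + y + h) - (a + b) ∈ H := by
              rw [← hq0, map_sub, sub_eq_zero, map_add, map_add, map_add, hqx, hqy, hqh,
                add_zero, hab]
            have hbk : b + ((x + y + h) - (a + b)) ∈ B \ B₀ := memB' b hbB' _ hk
            have heq : x + y + h = a + (b + ((x + y + h) - (a + b))) := by abel
            rw [heq]
            exact Finset.add_mem_add ha (Finset.mem_sdiff.mp hbk).1
          · have hmem : y + h ∈ B \ B₀ := memB' y (Finset.mem_sdiff.mpr ⟨hy, hyB⟩) h hhH
            have heq : x + y + h = x + (y + h) := by abel
            rw [heq]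
            exact Finset.add_mem_add hx (Finset.mem_sdiff.mp hmem).1
        · have hmem : x + h ∈ A \ A₀ := memA' x (Finset.mem_sdiff.mpr ⟨hx, hxA⟩) h hhH
          have heq : x + y + h = (x + h) + y := by abel
          rw [heq]
          exact Finset.add_mem_add (Finset.mem_sdiff.mp hmem).1 hy
      · apply le_of_eq
        rw [Finset.add_singleton, Finset.card_vadd_finset]
    exact hh0 (hap h hper)
  have main : ((A.image q).image (fun z => q (a₀ + b₀) - z) ∩ B.image q) = {q b₀} := by
    ext z
    simp only [Finset.mem_inter, Finset.mem_image, Finset.mem_singleton]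
    constructor
    · rintro ⟨⟨w, ⟨a, ha, rfl⟩, rfl⟩, b, hb, hzb⟩
      have hab : q a + q b = q a₀ + q b₀ := by
        rw [hzb, map_add]
        abel
      rw [← hzb]
      exact key a ha b hb hab
    · rintro rfl
      exact ⟨⟨q a₀, ⟨a₀, hA₀A ha₀, rfl⟩, by rw [map_add]; abel⟩, b₀, hB₀B hb₀, rfl⟩
  rw [main, Finset.card_singleton]
end
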